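/- Let (u,w) be the unique optimal solution of subproblem (V). Then (u,w) ≠ (0,0) if and only if ‖b‖ > ‖b + GᵀG w‖. -/
import Mathlib


open Matrix

/-- Euclidean norm of a vector in `ℝᵏ` (represented as `Fin k → ℝ`). -/
noncomputable def nrm2 {k : ℕ} (a : Fin k → ℝ) : ℝ := Real.sqrt (∑ i, (a i) ^ 2)

/-- Feasibility for subproblem (V): `Gᵀu = 0` and `x + u + Gw ≥ 0`. -/
def feasV {n m : ℕ} (G : Matrix (Fin n) (Fin m) ℝ) (x : Fin n → ℝ)
    (p : (Fin n → ℝ) × (Fin m → ℝ)) : Prop :=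
  Gᵀ *ᵥ p.1 = 0 ∧ 0 ≤ x + p.1 + G *ᵥ p.2

/-- Objective of subproblem (V): `(1/2)‖b + GᵀG w‖² + (1/2)μ‖u‖²`. -/
noncomputable def objV {n m : ℕ} (G : Matrix (Fin n) (Fin m) ℝ) (b : Fin m → ℝ) (μ : ℝ)
    (p : (Fin n → ℝ) × (Fin m → ℝ)) : ℝ :=
  (1 / 2) * nrm2 (b + Gᵀ *ᵥ (G *ᵥ p.2)) ^ 2 + (1 / 2) * μ * nrm2 p.1 ^ 2

lemma nrm2_sq {k : ℕ} (a : Fin k → ℝ) : nrm2 a ^ 2 = ∑ i, (a i) ^ 2 :=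
  Real.sq_sqrt (Finset.sum_nonneg fun i _ => sq_nonneg _)

lemma sumsq_pos {k : ℕ} {a : Fin k → ℝ} (ha : a ≠ 0) : 0 < ∑ i, (a i) ^ 2 := by
  rcases (Finset.sum_nonneg (fun i (_ : i ∈ Finset.univ) => sq_nonneg (a i))).lt_or_eq with h | h
  · exact h
  · exfalso
    apply ha
    funext i
    have h0 := (Finset.sum_eq_zero_iff_of_nonneg
      (fun i (_ : i ∈ Finset.univ) => sq_nonneg (a i))).mp h.symm i (Finset.mem_univ i)
    exact pow_eq_zero_iff (two_ne_zero) |>.mp h0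

lemma nrm2_lt_iff {k : ℕ} (a b : Fin k → ℝ) :
    nrm2 a < nrm2 b ↔ ∑ i, (a i) ^ 2 < ∑ i, (b i) ^ 2 := by
  unfold nrm2
  rw [Real.sqrt_lt_sqrt_iff (Finset.sum_nonneg fun i _ => sq_nonneg _)]

/-- The optimal solution `(u,w)` of subproblem (V) is nonzero if and only if
`‖b‖ > ‖b + GᵀG w‖`. -/
theorem normal_subproblem_nonzero_iff_strict_decrease
    {n m : ℕ} (G : Matrix (Fin n) (Fin m) ℝ) (b : Fin m → ℝ)
    (x : Fin n → ℝ) (μ : ℝ) (hx : 0 ≤ x) (hμ : 0 < μ)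
    (hrank : Function.Injective G.mulVec)
    (u : Fin n → ℝ) (w : Fin m → ℝ)
    (hfeas : feasV G x (u, w))
    (hopt : ∀ q, feasV G x q → objV G b μ (u, w) ≤ objV G b μ q) :
    ¬(u = 0 ∧ w = 0) ↔ nrm2 (b + Gᵀ *ᵥ (G *ᵥ w)) < nrm2 b := by
  set c := Gᵀ *ᵥ (G *ᵥ w) with hc
  have hinj : ∀ y : Fin m → ℝ, G *ᵥ y = 0 → y = 0 := by
    intro y hy
    apply hrank
    simpa using hy
  have hcw : w ≠ 0 → c ≠ 0 := by
    intro hw h0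
    apply hw
    apply hinj
    have h1 : w ⬝ᵥ c = 0 := by rw [h0, dotProduct_zero]
    rw [hc, Matrix.dotProduct_mulVec, Matrix.vecMul_transpose] at h1
    exact dotProduct_self_eq_zero.mp h1
  have feas0 : feasV G x (0, 0) := by
    constructor
    · simp
    · simpa using hx
  have base : (1/2) * (∑ i, (b i + c i) ^ 2) + (1/2) * μ * (∑ i, (u i) ^ 2)
      ≤ (1/2) * ∑ i, (b i) ^ 2 := by
    have h := hopt (0, 0) feas0
    simp only [objV, Matrix.mulVec_zero, add_zero, nrm2_sq, Pi.add_apply, Pi.zero_apply,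
      ne_eq, OfNat.ofNat_ne_zero, not_false_eq_true, zero_pow, Finset.sum_const_zero,
      mul_zero] at h
    linarith
  have expand : ∀ t : ℝ, (∑ i, (b i + t * c i) ^ 2)
      = (∑ i, (b i) ^ 2) + 2 * t * (∑ i, b i * c i) + t ^ 2 * (∑ i, (c i) ^ 2) := by
    intro t
    rw [Finset.mul_sum, Finset.mul_sum, ← Finset.sum_add_distrib, ← Finset.sum_add_distrib]
    exact Finset.sum_congr rfl fun i _ => by ring
  constructor
  · intro hne
    rw [nrm2_lt_iff]
    simp only [Pi.add_apply]
    by_cases hu : u = 0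
    · have hw : w ≠ 0 := fun hw0 => hne ⟨hu, hw0⟩
      have hcne := hcw hw
      have hcpos := sumsq_pos hcne
      by_contra hlt
      push_neg at hlt
      have hub : (∑ i, (b i + c i) ^ 2) ≤ ∑ i, (b i) ^ 2 := by
        have hz : (∑ i, (u i) ^ 2) = 0 := by simp [hu]
        rw [hz] at base
        linarith
      have heq : (∑ i, (b i + c i) ^ 2) = ∑ i, (b i) ^ 2 := le_antisymm hub hlt
      -- midpoint
      have feasH : feasV G x (0, (1/2 : ℝ) • w) := by
        constructor
        · simp
        · intro i
          have h2 := hfeas.2 i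
          have hxi := hx i
          simp only [Pi.add_apply, Pi.zero_apply, Pi.le_def, hu, Matrix.mulVec_smul,
            Pi.smul_apply, smul_eq_mul] at h2 hxi ⊢
          linarith
      have hmid := hopt _ feasH
      simp only [objV, nrm2_sq, Matrix.mulVec_smul, Pi.add_apply, Pi.smul_apply,
        smul_eq_mul, hu, Pi.zero_apply, ne_eq, OfNat.ofNat_ne_zero, not_false_eq_true,
        zero_pow, Finset.sum_const_zero, mul_zero, add_zero] at hmid
      have hmid' : (∑ i, (b i + c i) ^ 2) ≤ ∑ i, (b i + (1/2) * c i) ^ 2 := by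
        linarith
      have e1 := expand 1
      have eh := expand (1/2)
      simp only [one_mul, one_pow] at e1
      nlinarith [hcpos]
    · have hupos := sumsq_pos hu
      have : 0 < (1/2) * μ * (∑ i, (u i) ^ 2) := by positivity
      linarith
  · intro h hzero
    obtain ⟨hu, hw⟩ := hzero
    rw [hc, hw] at h
    simp at h
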